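/- Assume the trust-region parameter block, let γ > 1, and let ν ∈ (0,1) satisfy ν/(1−ν) > (γ² − γ⁻²)/((η₁ − η)·κ_fcd·min{η₂/κ_bmh, 1}). Let Δ > 0, let h, H ∈ ℝⁿ satisfy ‖h‖ ≥ ζ·Δ and ‖h − H‖ ≤ κ_grad·Δ, and let ared, pred, Ψ, Ψ′ be real numbers with ared ≥ pred − 2·κ_val·Δ², pred ≥ κ_fcd·‖H‖·min{‖H‖/κ_bmh, Δ}, and Ψ′ − Ψ ≤ −ν·ared + (1 − ν)(γ² − 1)·Δ². Then Ψ′ − Ψ ≤ −ν·c₆·‖h‖·Δ + (1 − ν)(γ² − 1)·Δ² < 0. -/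
import Mathlib
set_option maxHeartbeats 1000000


theorem aux_neg_stmt8 (c z D nh Δ ν γ gi : ℝ) (hΔ : 0 < Δ) (hν0 : 0 < ν) (hν1 : ν < 1)
    (hc : 0 ≤ c) (hcz : D ≤ c * z) (hnh : z * Δ ≤ nh)
    (hνD : (γ ^ 2 - gi ^ 2) * (1 - ν) < ν * D) (hgi : gi ^ 2 ≤ 1) :
    -ν * c * nh * Δ + (1 - ν) * (γ ^ 2 - 1) * Δ ^ 2 < 0 := by
  have e1 : ν * D * Δ ^ 2 ≤ ν * (c * z) * Δ ^ 2 :=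
    mul_le_mul_of_nonneg_right (mul_le_mul_of_nonneg_left hcz hν0.le) (sq_nonneg Δ)
  have e3 : ν * (c * z) * Δ ^ 2 ≤ ν * c * nh * Δ := by
    have m := mul_le_mul_of_nonneg_left (mul_le_mul_of_nonneg_left hnh hc)
      (mul_nonneg hν0.le hΔ.le)
    nlinarith [m]
  have e2 := mul_lt_mul_of_pos_right hνD (pow_pos hΔ 2)
  have e4 : (0:ℝ) ≤ (1 - ν) * (1 - gi ^ 2) * Δ ^ 2 :=
    mul_nonneg (mul_nonneg (by linarith) (by linarith)) (sq_nonneg Δ)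
  nlinarith [e1, e2, e3, e4]


theorem stmt_8 {n : ℕ} (L κbmh κgrad κfcd η₂ η₁ η ζ γ ν : ℝ)
    (hL : 0 < L) (hκbmh : 1 ≤ κbmh) (hκgrad : 0 < κgrad) (hκfcd : 0 < κfcd)
    (hη₂ : 0 < η₂) (hη₁ : η₁ ∈ Set.Ioo (0 : ℝ) 1)
    (hη : η ∈ Set.Ioo 0 (min η₁ (1 - η₁)))
    (hζ : ζ ≥ κgrad + max η₂
      (4 * ((L + κbmh + 2 * κgrad) / 4) / ((1 - η₁ - η) * min κfcd 1)))
    (hγ : 1 < γ) (hν : ν ∈ Set.Ioo (0 : ℝ) 1)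
    (hνγ : ν / (1 - ν) > (γ ^ 2 - γ⁻¹ ^ 2) / ((η₁ - η) * κfcd * min (η₂ / κbmh) 1))
    (Δ : ℝ) (hΔ : 0 < Δ)
    (h H : EuclideanSpace ℝ (Fin n))
    (hh : ‖h‖ ≥ ζ * Δ) (hhH : ‖h - H‖ ≤ κgrad * Δ)
    (ared pred Ψ Ψ' : ℝ)
    (hared : ared ≥ pred - 2 * ((L + κbmh + 2 * κgrad) / 4) * Δ ^ 2)
    (hpred : pred ≥ κfcd * ‖H‖ * min (‖H‖ / κbmh) Δ)
    (hΨ : Ψ' - Ψ ≤ -ν * ared + (1 - ν) * (γ ^ 2 - 1) * Δ ^ 2) :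
    Ψ' - Ψ ≤
        -ν * (κfcd - (2 * ((L + κbmh + 2 * κgrad) / 4) + κfcd * κgrad) / ζ) * ‖h‖ * Δ +
          (1 - ν) * (γ ^ 2 - 1) * Δ ^ 2 ∧
      -ν * (κfcd - (2 * ((L + κbmh + 2 * κgrad) / 4) + κfcd * κgrad) / ζ) * ‖h‖ * Δ +
          (1 - ν) * (γ ^ 2 - 1) * Δ ^ 2 < 0 := by
  obtain ⟨hη₁0, hη₁1⟩ := hη₁
  obtain ⟨hη0, hηlt⟩ := hη
  obtain ⟨hν0, hν1⟩ := hν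
  have hηη₁ : η < η₁ := lt_of_lt_of_le hηlt (min_le_left _ _)
  have hη1' : η < 1 - η₁ := lt_of_lt_of_le hηlt (min_le_right _ _)
  set K := (L + κbmh + 2 * κgrad) / 4 with hKdef
  have hK : 0 < K := by rw [hKdef]; linarith
  have hbmh0 : (0:ℝ) < κbmh := by linarith
  have hm1 : 0 < min κfcd 1 := lt_min hκfcd one_pos
  have hde : 0 < 1 - η₁ - η := by linarith
  have hd : 0 < (1 - η₁ - η) * min κfcd 1 := mul_pos hde hm1
  set A := 4 * K / ((1 - η₁ - η) * min κfcd 1) with hAdef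
  have hA : 0 < A := div_pos (by linarith) hd
  have hζ' : ζ - κgrad ≥ max η₂ A := by linarith [hζ]
  have hζη₂ : ζ - κgrad ≥ η₂ := le_trans (le_max_left η₂ A) hζ'
  have hζA : ζ - κgrad ≥ A := le_trans (le_max_right η₂ A) hζ'
  have hζpos : 0 < ζ := by linarith
  have hAd : A * ((1 - η₁ - η) * min κfcd 1) = 4 * K := div_mul_cancel₀ _ hd.ne'
  have hAb : κbmh < A := by
    have hdle : (1 - η₁ - η) * min κfcd 1 ≤ 1 :=
      mul_le_one₀ (by linarith) hm1.le (min_le_right κfcd 1)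
    have h4K : 4 * K = L + κbmh + 2 * κgrad := by rw [hKdef]; ring
    have hAd' : A * ((1 - η₁ - η) * min κfcd 1) ≤ A * 1 :=
      mul_le_mul_of_nonneg_left hdle hA.le
    linarith [hAd, hAd', h4K]
  have hnH : ‖H‖ ≥ ‖h‖ - κgrad * Δ := by
    have h1 := norm_sub_norm_le h H
    linarith
  have hHb : ‖H‖ ≥ κbmh * Δ := by
    have t1 := mul_le_mul_of_nonneg_right hζA hΔ.le
    have t2 := mul_le_mul_of_nonneg_right hAb.le hΔ.le
    linarith [t1, t2, hnH, hh]
  have hmin : min (‖H‖ / κbmh) Δ = Δ := by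
    apply min_eq_right
    rw [le_div_iff₀ hbmh0]
    nlinarith [hHb]
  rw [hmin] at hpred
  set c6 := κfcd - (2 * K + κfcd * κgrad) / ζ with hc6def
  have hpred' : pred ≥ κfcd * (‖h‖ - κgrad * Δ) * Δ := by
    have t := mul_le_mul_of_nonneg_left hnH (mul_nonneg hκfcd.le hΔ.le)
    linarith [t, hpred]
  have hared' : ared ≥ κfcd * (‖h‖ - κgrad * Δ) * Δ - 2 * K * Δ ^ 2 := by
    linarith
  have hdiv : (2 * K + κfcd * κgrad) / ζ * ‖h‖ ≥ (2 * K + κfcd * κgrad) * Δ := by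
    rw [div_mul_eq_mul_div, ge_iff_le, le_div_iff₀ hζpos]
    have hc : (0:ℝ) ≤ 2 * K + κfcd * κgrad := by positivity
    linarith [mul_le_mul_of_nonneg_left hh hc]
  have key1 : c6 * ‖h‖ * Δ ≤ ared := by
    rw [hc6def]
    have w := mul_le_mul_of_nonneg_right hdiv hΔ.le
    have u : (κfcd - (2 * K + κfcd * κgrad) / ζ) * ‖h‖ * Δ =
        κfcd * (‖h‖ - κgrad * Δ) * Δ - 2 * K * Δ ^ 2 +
          ((2 * K + κfcd * κgrad) * Δ * Δ - (2 * K + κfcd * κgrad) / ζ * ‖h‖ * Δ) := by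
      ring
    linarith [u, w, hared']
  have hm2 : 0 < min (η₂ / κbmh) 1 := lt_min (div_pos hη₂ hbmh0) one_pos
  have htm : ζ - κgrad ≥ min (η₂ / κbmh) 1 := by
    have h1 : min (η₂ / κbmh) 1 ≤ η₂ / κbmh := min_le_left _ _
    have h2 : η₂ / κbmh ≤ η₂ := div_le_self hη₂.le hκbmh
    linarith
  have hexp : c6 * ζ = κfcd * (ζ - κgrad) - 2 * K := by
    rw [hc6def]
    field_simp
    ring
  have ht0 : (0:ℝ) ≤ ζ - κgrad := le_trans hm2.le htm
  have hc6ζ : c6 * ζ ≥ (η₁ - η) * κfcd * min (η₂ / κbmh) 1 := by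
    rw [hexp]
    have h2K : 2 * K ≤ (ζ - κgrad) * ((1 - η₁ - η) * κfcd) / 2 := by
      have q1 := mul_le_mul_of_nonneg_right hζA hd.le
      have q2 := mul_le_mul_of_nonneg_left (min_le_left κfcd 1)
        (mul_nonneg ht0 hde.le)
      linarith [hAd, q1, q2]
    have hco : (0:ℝ) ≤ (1 + η₁ + η) / 2 - (η₁ - η) := by linarith
    have v : (0:ℝ) ≤ κfcd * (ζ - κgrad) * ((1 + η₁ + η) / 2 - (η₁ - η)) :=
      mul_nonneg (mul_nonneg hκfcd.le ht0) hco
    have w := mul_le_mul_of_nonneg_right htm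
      (mul_nonneg hκfcd.le (by linarith : (0:ℝ) ≤ η₁ - η))
    linarith [h2K, v, w]
  have hD : 0 < (η₁ - η) * κfcd * min (η₂ / κbmh) 1 := by
    have : 0 < η₁ - η := by linarith
    positivity
  have hc6 : 0 < c6 := by
    have h0 : 0 < c6 * ζ := lt_of_lt_of_le hD hc6ζ
    rcases mul_pos_iff.mp h0 with ⟨h1, _⟩ | ⟨_, h2⟩
    · exact h1
    · linarith
  constructor
  · have h1 := mul_le_mul_of_nonneg_left key1 hν0.le
    linarith [h1, hΨ]
  · have hνD : (γ ^ 2 - γ⁻¹ ^ 2) * (1 - ν) <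
        ν * ((η₁ - η) * κfcd * min (η₂ / κbmh) 1) :=
      (div_lt_div_iff₀ hD (by linarith : (0:ℝ) < 1 - ν)).mp hνγ
    have hinv : γ⁻¹ ^ 2 ≤ 1 := by
      have h1 : γ⁻¹ ≤ 1 := by
        rw [inv_le_one_iff₀]; right; linarith
      have h2 : (0:ℝ) ≤ γ⁻¹ := by positivity
      calc γ⁻¹ ^ 2 ≤ 1 ^ 2 := by exact pow_le_pow_left₀ h2 h1 2
        _ = 1 := one_pow 2
    exact aux_neg_stmt8 c6 ζ ((η₁ - η) * κfcd * min (η₂ / κbmh) 1) ‖h‖ Δ ν γ γ⁻¹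
      hΔ hν0 hν1 hc6.le hc6ζ hh hνD hinv
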